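/- Let H be a finite simple graph with at least 2 vertices. If H admits a rank-decomposition of width at most k, then there exists a balanced partition (A,B) of V(H), i.e. with |A| ≥ |V(H)|/3 and |B| ≥ |V(H)|/3, such that cutrank_H(A,B) ≤ k. -/

import Mathlib

/-!
Orient every edge of the decomposition tree towards a side containing at least a third of the
vertices of `H`. If such a side holds more than two thirds, its inner end is not a leaf (a leaf's
side is a single vertex), hence an internal node of degree at most three, so the side splits into
at most two branches and one of them again holds at least a third. Sides shrink strictly along
this descent, so an edge whose side is minimal in the tree has both sides of size at least a third.
-/

open Classical

/-- The cutrank of a pair of vertex sets `X`, `Y` in a graph `G`: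
the rank over `𝔽₂` of the `X × Y` biadjacency matrix. -/
noncomputable def cutrank {V : Type*} (G : SimpleGraph V) (X Y : Finset V) : ℕ :=
  Matrix.rank (Matrix.of fun (x : X) (y : Y) => if G.Adj x.1 y.1 then (1 : ZMod 2) else 0)


/-- A rank-decomposition of a graph on vertex type `V`: a subcubic tree
together with a bijection from `V` to the leaves (degree-1 vertices) of the tree. -/
structure RankDecomp (V : Type*) [Fintype V] where
  n : ℕ
  tree : SimpleGraph (Fin n)
  isTree : tree.IsTree
  subcubic : ∀ t : Fin n, tree.degree t ≤ 3
  leaf : V → Fin n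
  leafDeg : ∀ v : V, tree.degree (leaf v) = 1
  leafInj : Function.Injective leaf
  leafSurj : ∀ t : Fin n, tree.degree t = 1 → ∃ v : V, leaf v = t

/-- The side of the edge `{u, v}` of the decomposition tree containing `u`:
all vertices of `G` whose leaf lies in the component of `u` after deleting the edge. -/
noncomputable def RankDecomp.side {V : Type*} [Fintype V] (d : RankDecomp V) (u v : Fin d.n) :
    Finset V :=
  Finset.univ.filter fun x => (d.tree.deleteEdges {s(u, v)}).Reachable (d.leaf x) u

/-- The decomposition `d` has width at most `k` for the graph `G`: every edge of the
tree induces a partition of the vertices of cutrank at most `k`. -/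
def RankDecomp.widthLE {V : Type*} [Fintype V] (G : SimpleGraph V) (d : RankDecomp V) (k : ℕ) :
    Prop :=
  ∀ u v : Fin d.n, d.tree.Adj u v → cutrank G (d.side u v) (d.side v u) ≤ k

/-- The rankwidth of `G`: the minimum width of a rank-decomposition of `G`. -/
noncomputable def rankwidth {V : Type*} [Fintype V] (G : SimpleGraph V) : ℕ :=
  sInf {k | ∃ d : RankDecomp V, RankDecomp.widthLE G d k}


namespace SimpleGraph

variable {W : Type*} {T : SimpleGraph W} {u v w z : W}

def edgeSide (T : SimpleGraph W) (u v : W) : Set W :=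
  {z | (T.deleteEdges {s(u, v)}).Reachable z u}

lemma mem_edgeSide : z ∈ T.edgeSide u v ↔ (T.deleteEdges {s(u, v)}).Reachable z u := Iff.rfl

lemma mem_edgeSide_self : u ∈ T.edgeSide u v := Reachable.rfl

lemma deleteEdges_singleton_swap : T.deleteEdges {s(v, u)} = T.deleteEdges {s(u, v)} := by
  rw [Sym2.eq_swap]

lemma Walk.mem_edgeSide_or {y : W} (p : T.Walk z y)
    (hy : y ∈ T.edgeSide u v ∨ y ∈ T.edgeSide v u) :
    z ∈ T.edgeSide u v ∨ z ∈ T.edgeSide v u := by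
  induction p with
  | nil => exact hy
  | @cons a c _ hac _ ih =>
    by_cases he : s(a, c) = s(u, v)
    · rcases Sym2.eq_iff.mp he with ⟨rfl, -⟩ | ⟨rfl, -⟩
      · exact .inl mem_edgeSide_self
      · exact .inr mem_edgeSide_self
    · have hac' : (T.deleteEdges {s(u, v)}).Adj a c := deleteEdges_adj.mpr ⟨hac, he⟩
      simp only [mem_edgeSide, deleteEdges_singleton_swap (u := u)] at hy ih ⊢
      exact (ih hy).imp hac'.reachable.trans hac'.reachable.trans

lemma Preconnected.mem_edgeSide_or (hT : T.Preconnected) (z : W) :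
    z ∈ T.edgeSide u v ∨ z ∈ T.edgeSide v u :=
  (hT z u).some.mem_edgeSide_or (.inl mem_edgeSide_self)

lemma IsAcyclic.disjoint_edgeSide (hT : T.IsAcyclic) (huv : T.Adj u v) :
    Disjoint (T.edgeSide u v) (T.edgeSide v u) := by
  refine Set.disjoint_left.mpr fun z hu hv => ?_
  rw [mem_edgeSide, deleteEdges_singleton_swap] at hv
  exact isBridge_iff.mp (isAcyclic_iff_forall_adj_isBridge.mp hT huv) (hu.symm.trans hv)

lemma exists_adj_mem_edgeSide (hz : z ∈ T.edgeSide v u) (hzv : z ≠ v) :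
    ∃ w, T.Adj v w ∧ w ≠ u ∧ z ∈ T.edgeSide w v := by
  obtain ⟨p, hp⟩ := hz.symm.exists_isPath
  cases p with
  | nil => exact absurd rfl hzv
  | @cons _ w _ hvw q =>
    obtain ⟨hvw, hne⟩ := deleteEdges_adj.mp hvw
    rw [Walk.cons_isPath_iff] at hp
    refine ⟨w, hvw, fun hwu => hne (by simp [hwu]), ?_⟩
    refine reachable_deleteEdges_iff_exists_walk.mpr ⟨(q.mapLe (deleteEdges_le _)).reverse, ?_⟩
    rw [Walk.edges_reverse, List.mem_reverse, Walk.edges_mapLe_eq_edges]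
    exact fun h => hp.2 (q.snd_mem_support_of_mem_edges h)

lemma IsAcyclic.edgeSide_subset (hT : T.IsAcyclic) (hvw : T.Adj v w) (hwu : w ≠ u) :
    T.edgeSide w v ⊆ T.edgeSide v u := by
  rintro z ⟨p⟩
  have hv : v ∉ p.support := fun hv =>
    Set.disjoint_left.mp (hT.disjoint_edgeSide hvw) mem_edgeSide_self
      ⟨p.dropUntil v hv⟩
  have hzw : (T.deleteEdges {s(v, u)}).Reachable z w := by
    refine reachable_deleteEdges_iff_exists_walk.mpr ⟨p.mapLe (deleteEdges_le _), fun h => hv ?_⟩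
    rw [Walk.edges_mapLe_eq_edges] at h
    exact p.fst_mem_support_of_mem_edges h
  exact hzw.trans (deleteEdges_adj.mpr ⟨hvw.symm, by simp [hwu, hvw.ne']⟩).reachable

lemma IsAcyclic.edgeSide_ssubset (hT : T.IsAcyclic) (hvw : T.Adj v w) (hwu : w ≠ u) :
    T.edgeSide w v ⊂ T.edgeSide v u :=
  (Set.ssubset_iff_of_subset (hT.edgeSide_subset hvw hwu)).mpr
    ⟨v, mem_edgeSide_self, Set.disjoint_left.mp (hT.disjoint_edgeSide hvw) mem_edgeSide_self⟩

end SimpleGraph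

namespace RankDecomp

open SimpleGraph

variable {V : Type*} [Fintype V] (d : RankDecomp V) {u v : Fin d.n}

lemma mem_side {x : V} : x ∈ d.side u v ↔ d.leaf x ∈ d.tree.edgeSide u v := by
  simp [side, edgeSide]

lemma union_side (u v : Fin d.n) : d.side u v ∪ d.side v u = Finset.univ :=
  Finset.eq_univ_of_forall fun x => Finset.mem_union.mpr <| by
    simpa only [mem_side] using d.isTree.connected.preconnected.mem_edgeSide_or (d.leaf x)

lemma disjoint_side (huv : d.tree.Adj u v) : Disjoint (d.side u v) (d.side v u) :=
  Finset.disjoint_left.mpr fun _ hu hv =>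
    Set.disjoint_left.mp (d.isTree.isAcyclic.disjoint_edgeSide huv) (d.mem_side.mp hu)
      (d.mem_side.mp hv)

lemma card_side_add_card_side (huv : d.tree.Adj u v) :
    (d.side u v).card + (d.side v u).card = Fintype.card V := by
  rw [← Finset.card_union_of_disjoint (d.disjoint_side huv), d.union_side u v, Finset.card_univ]

lemma exists_adj [Nonempty V] : ∃ u v, d.tree.Adj u v :=
  ⟨_, (d.tree.degree_pos_iff_exists_adj _).mp (d.leafDeg (Classical.arbitrary V) ▸ one_pos)⟩

lemma card_side_le_one_of_leaf_eq {x : V} (hx : d.leaf x = v) (huv : d.tree.Adj u v) :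
    (d.side v u).card ≤ 1 := by
  have hleaf : ∀ y ∈ d.side v u, d.leaf y = v := fun y hy => by
    by_contra hyv
    obtain ⟨w, hvw, hwu, -⟩ := exists_adj_mem_edgeSide (d.mem_side.mp hy) hyv
    have hdeg : (d.tree.neighborFinset v).card ≤ 1 := by
      rw [card_neighborFinset_eq_degree, ← hx, d.leafDeg]
    exact hwu (Finset.card_le_one.mp hdeg w (by simpa using hvw) u (by simpa using huv.symm))
  exact Finset.card_le_one.mpr fun a ha b hb => d.leafInj ((hleaf a ha).trans (hleaf b hb).symm)

lemma side_subset_biUnion (hv : ∀ x, d.leaf x ≠ v) :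
    d.side v u ⊆ ((d.tree.neighborFinset v).erase u).biUnion (d.side · v) := by
  intro x hx
  obtain ⟨w, hvw, hwu, hxw⟩ := exists_adj_mem_edgeSide (d.mem_side.mp hx) (hv x)
  exact Finset.mem_biUnion.mpr ⟨w, by simpa [hwu] using hvw, d.mem_side.mpr hxw⟩

lemma exists_heavy_branch (hV : 2 ≤ Fintype.card V) (huv : d.tree.Adj u v)
    (hheavy : 2 * Fintype.card V < 3 * (d.side v u).card) :
    ∃ w, d.tree.Adj v w ∧ w ≠ u ∧ Fintype.card V ≤ 3 * (d.side w v).card := by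
  by_cases hleaf : ∃ x, d.leaf x = v
  · obtain ⟨x, hx⟩ := hleaf
    have := d.card_side_le_one_of_leaf_eq hx huv
    omega
  simp only [not_exists] at hleaf
  set M := (d.tree.neighborFinset v).erase u
  have hsub := d.side_subset_biUnion (u := u) hleaf
  have hM : M.card ≤ 2 := by
    have := d.subcubic v
    rw [Finset.card_erase_of_mem (by simpa using huv.symm), card_neighborFinset_eq_degree]
    omega
  have hMne : M.Nonempty := by
    obtain ⟨x, hx⟩ := Finset.card_pos.mp (by omega : 0 < (d.side v u).card)
    obtain ⟨w, hw, -⟩ := Finset.mem_biUnion.mp (hsub hx)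
    exact ⟨w, hw⟩
  have hsum : ∑ _w ∈ M, Fintype.card V ≤ ∑ w ∈ M, 3 * (d.side w v).card := by
    have := (Finset.card_le_card hsub).trans Finset.card_biUnion_le
    rw [Finset.sum_const, smul_eq_mul, ← Finset.mul_sum]
    nlinarith
  obtain ⟨w, hwM, hw⟩ := Finset.exists_le_of_sum_le hMne hsum
  obtain ⟨hwu, hvw⟩ := Finset.mem_erase.mp hwM
  exact ⟨w, (mem_neighborFinset _ _ _).mp hvw, hwu, hw⟩

lemma exists_balanced_edge (hV : 2 ≤ Fintype.card V) :
    ∃ u v, d.tree.Adj u v ∧ Fintype.card V ≤ 3 * (d.side u v).card ∧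
      Fintype.card V ≤ 3 * (d.side v u).card := by
  have : Nonempty V := Fintype.card_pos_iff.mp (by omega)
  obtain ⟨u₀, v₀, h₀⟩ := d.exists_adj
  set heavy := Finset.univ.filter fun e : Fin d.n × Fin d.n =>
    d.tree.Adj e.1 e.2 ∧ Fintype.card V ≤ 3 * (d.side e.2 e.1).card
  have hne : heavy.Nonempty := by
    have := d.card_side_add_card_side h₀
    by_cases h : Fintype.card V ≤ 3 * (d.side v₀ u₀).card
    · exact ⟨(u₀, v₀), Finset.mem_filter.mpr ⟨Finset.mem_univ _, h₀, h⟩⟩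
    · exact ⟨(v₀, u₀), Finset.mem_filter.mpr ⟨Finset.mem_univ _, h₀.symm,
        show Fintype.card V ≤ 3 * (d.side u₀ v₀).card by omega⟩⟩
  obtain ⟨⟨u, v⟩, huv, hmin⟩ :=
    heavy.exists_min_image (fun e => (d.tree.edgeSide e.2 e.1).ncard) hne
  simp only [heavy, Finset.mem_filter, Finset.mem_univ, true_and] at huv hmin
  refine ⟨u, v, huv.1, ?_, huv.2⟩
  by_contra! hlight
  have := d.card_side_add_card_side huv.1
  obtain ⟨w, hvw, hwu, hw⟩ := d.exists_heavy_branch hV huv.1 (by omega)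
  exact (Set.ncard_lt_ncard (d.isTree.isAcyclic.edgeSide_ssubset hvw hwu)).not_ge
    (hmin (v, w) ⟨hvw, hw⟩)

end RankDecomp

/-- If a graph `H` with at least 2 vertices admits a rank-decomposition of width
at most `k`, then there is a balanced partition `(A, B)` of `V(H)` (both parts of
size at least `|V(H)|/3`) with `cutrank_H(A, B) ≤ k`. -/
theorem exists_balanced_cut_of_rankDecomp
    {V : Type*} [Fintype V] (H : SimpleGraph V) (hV : 2 ≤ Fintype.card V)
    (k : ℕ) (d : RankDecomp V) (hd : RankDecomp.widthLE H d k) :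
    ∃ A B : Finset V, A ∪ B = Finset.univ ∧ Disjoint A B ∧
      Fintype.card V ≤ 3 * A.card ∧ Fintype.card V ≤ 3 * B.card ∧
      cutrank H A B ≤ k := by
  obtain ⟨u, v, huv, hu, hv⟩ := d.exists_balanced_edge hV
  exact ⟨d.side u v, d.side v u, d.union_side u v, d.disjoint_side huv, hu, hv, hd u v huv⟩
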